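/- There exists ε > 0, depending only on 𝒥, ℛ, (ā_r)_{r∈ℛ}, and C, such that for every x ∈ (0,∞)^E the following holds: writing, for each route r = (j_1^r, …, j_{K_r}^r), u_{k,r} = x_{j_k^r r} σ*_{j_k^r}(q) / q_{j_k^r} for 1 ≤ k ≤ K_r and u_{0,r} = u_{K_r+1, r} = ā_r, one has Σ_{r∈ℛ} Σ_{k=0}^{K_r} ( u_{k,r} − u_{k+1,r} )² ≥ ε. (Uniform strict negativity of the entropy drift terms.) -/

import Mathlib

open scoped Classical

/-- Per-link queue sizes `q j = ∑_{r ∋ j} x j r`, where route `r` consists of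
the links `link r 0, …, link r (K r - 1)`. -/
noncomputable def qOf {J R : Type} [Fintype R] (K : R → ℕ) (link : R → ℕ → J)
    (x : J → R → ℝ) (j : J) : ℝ :=
  ∑ r ∈ Finset.univ.filter (fun r => ∃ k < K r, link r k = j), x j r

/-- The normalized flow terms along a route: `u r k = x_{j_k r} σ*_{j_k}(q) / q_{j_k}`
for `1 ≤ k ≤ K r` (with the `k`-th link of `r` being `link r (k-1)`), and
`u r k = ā_r` for `k = 0` and `k = K r + 1` (and at all other indices). -/
noncomputable def uval {J R : Type} [Fintype R] (K : R → ℕ) (link : R → ℕ → J)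
    (abar : R → ℝ) (sstar : (J → ℝ) → J → ℝ) (x : J → R → ℝ) (r : R) (k : ℕ) : ℝ :=
  if 1 ≤ k ∧ k ≤ K r then
    x (link r (k - 1)) r * sstar (qOf K link x) (link r (k - 1)) /
      qOf K link x (link r (k - 1))
  else abar r

/-!
Suppose every link is loaded (`q > 0`). Moving the maximizer `σ*(q)` by the same small amount
in every coordinate strictly increases `∑ q_j log s_j`, so `σ*(q)` lies on the boundary of `C`,
at distance at least `δ` from the interior point `ā`. On the other hand, on each link `j` the
terms `u_{k,r}` with `j_k^r = j` add up to `σ*_j(q)`, while each of them differs from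
`ā_r = u_{0,r}` by at most the sum of the route's increments `|u_{i,r} - u_{i+1,r}|`. Hence
`δ ≤ M √S`, where `S` is the sum of squared increments and `M = ∑_r (K_r + 1)` the number of
its terms, and `ε = (δ / M)²` works.
-/

open Finset Real

lemma abs_sub_le_sum_range_abs_sub (u : ℕ → ℝ) {k n : ℕ} (hk : k ≤ n) :
    |u k - u 0| ≤ ∑ i ∈ range n, |u i - u (i + 1)| := by
  calc |u k - u 0| = dist (u 0) (u k) := by rw [Real.dist_eq, abs_sub_comm]
    _ ≤ ∑ i ∈ range k, dist (u i) (u (i + 1)) := dist_le_range_sum_dist u k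
    _ ≤ ∑ i ∈ range n, dist (u i) (u (i + 1)) :=
        sum_le_sum_of_subset_of_nonneg (range_mono hk) fun _ _ _ => dist_nonneg
    _ = ∑ i ∈ range n, |u i - u (i + 1)| := by simp only [Real.dist_eq]

lemma sum_sum_abs_le_mul_sqrt_sum_sum_sq {ι κ : Type*} (s : Finset ι) (t : ι → Finset κ)
    (f : ι → κ → ℝ) :
    ∑ i ∈ s, ∑ k ∈ t i, |f i k| ≤
      (∑ i ∈ s, #(t i) : ℕ) * √(∑ i ∈ s, ∑ k ∈ t i, f i k ^ 2) := by
  set S := ∑ i ∈ s, ∑ k ∈ t i, f i k ^ 2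
  have hterm : ∀ i ∈ s, ∀ k ∈ t i, |f i k| ≤ √S := fun i hi k hk =>
    abs_le_sqrt <| (single_le_sum (fun k _ => sq_nonneg (f i k)) hk).trans <|
      single_le_sum (f := fun i => ∑ k ∈ t i, f i k ^ 2)
        (fun i _ => sum_nonneg fun k _ => sq_nonneg (f i k)) hi
  calc ∑ i ∈ s, ∑ k ∈ t i, |f i k| ≤ ∑ i ∈ s, ∑ _k ∈ t i, √S :=
        sum_le_sum fun i hi => sum_le_sum fun k hk => hterm i hi k hk
    _ = (∑ i ∈ s, #(t i) : ℕ) * √S := by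
        simp only [sum_const, nsmul_eq_mul, sum_mul, Nat.cast_sum]

lemma notMem_interior_of_forall_sum_mul_log_le {J : Type*} [Fintype J] [Nonempty J]
    {C : Set (J → ℝ)} {q s : J → ℝ} (hq : ∀ j, 0 < q j) (hs : ∀ j, 0 < s j)
    (hmax : ∀ t ∈ C, (∀ j, 0 < t j) → ∑ j, q j * log (t j) ≤ ∑ j, q j * log (s j)) :
    s ∉ interior C := by
  intro hint
  obtain ⟨η, hη, hball⟩ := Metric.isOpen_iff.mp isOpen_interior s hint
  set t : J → ℝ := fun j => s j + η / 2
  have hst : ∀ j, s j < t j := fun j => lt_add_of_pos_right _ (half_pos hη)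
  have htC : t ∈ C := interior_subset <| hball <| by
    rw [Metric.mem_ball, dist_pi_lt_iff hη]
    intro j
    rw [Real.dist_eq, add_sub_cancel_left, abs_of_pos (half_pos hη)]
    exact half_lt_self hη
  have hlt : ∑ j, q j * log (s j) < ∑ j, q j * log (t j) :=
    sum_lt_sum_of_nonempty univ_nonempty fun j _ =>
      mul_lt_mul_of_pos_left (log_lt_log (hs j) (hst j)) (hq j)
  exact (hmax t htC fun j => (hs j).trans (hst j)).not_gt hlt

section Network

variable {J R : Type} [Fintype R] (K : R → ℕ) (link : R → ℕ → J)

lemma qOf_pos {x : J → R → ℝ} (hx : ∀ r, ∀ k < K r, 0 < x (link r k) r) {j : J}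
    (hj : ∃ r, ∃ k < K r, link r k = j) : 0 < qOf K link x j := by
  obtain ⟨r₀, k₀, hk₀, hl₀⟩ := hj
  refine sum_pos (fun r hr => ?_) ⟨r₀, mem_filter.mpr ⟨mem_univ _, k₀, hk₀, hl₀⟩⟩
  obtain ⟨k, hk, rfl⟩ := (mem_filter.mp hr).2
  exact hx r k hk

lemma sum_mul_div_qOf {x : J → R → ℝ} {j : J} (hq : qOf K link x j ≠ 0) (c : ℝ) :
    ∑ r ∈ univ.filter (fun r => ∃ k < K r, link r k = j), x j r * c / qOf K link x j = c := by
  rw [← sum_div, ← sum_mul]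
  exact mul_div_cancel_left₀ c hq

variable (abar : R → ℝ) (sstar : (J → ℝ) → J → ℝ) (x : J → R → ℝ)

lemma uval_zero (r : R) : uval K link abar sstar x r 0 = abar r := by
  simp [uval]

lemma uval_succ_of_link_eq {r : R} {k : ℕ} {j : J} (hk : k < K r) (hl : link r k = j) :
    uval K link abar sstar x r (k + 1) =
      x j r * sstar (qOf K link x) j / qOf K link x j := by
  simp [uval, Nat.succ_le_of_lt hk, hl]

lemma abs_sstar_sub_sum_abar_le {j : J} (hq : qOf K link x j ≠ 0) :
    |sstar (qOf K link x) j - ∑ r ∈ univ.filter (fun r => ∃ k < K r, link r k = j), abar r| ≤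
      ∑ r, ∑ k ∈ range (K r + 1),
        |uval K link abar sstar x r k - uval K link abar sstar x r (k + 1)| := by
  set u := uval K link abar sstar x
  set Rj := univ.filter (fun r => ∃ k < K r, link r k = j)
  have hroute : ∀ r ∈ Rj, |x j r * sstar (qOf K link x) j / qOf K link x j - abar r| ≤
      ∑ k ∈ range (K r + 1), |u r k - u r (k + 1)| := by
    intro r hr
    obtain ⟨k, hk, hl⟩ := (mem_filter.mp hr).2
    rw [← uval_succ_of_link_eq K link abar sstar x hk hl, ← uval_zero K link abar sstar x r]
    exact abs_sub_le_sum_range_abs_sub (u r) (by omega)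
  calc |sstar (qOf K link x) j - ∑ r ∈ Rj, abar r|
      = |∑ r ∈ Rj, (x j r * sstar (qOf K link x) j / qOf K link x j - abar r)| := by
        rw [sum_sub_distrib, sum_mul_div_qOf K link hq]
    _ ≤ ∑ r ∈ Rj, |x j r * sstar (qOf K link x) j / qOf K link x j - abar r| :=
        abs_sum_le_sum_abs _ _
    _ ≤ ∑ r ∈ Rj, ∑ k ∈ range (K r + 1), |u r k - u r (k + 1)| := sum_le_sum hroute
    _ ≤ ∑ r, ∑ k ∈ range (K r + 1), |u r k - u r (k + 1)| :=
        sum_le_sum_of_subset_of_nonneg (subset_univ _) fun _ _ _ =>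
          sum_nonneg fun _ _ => abs_nonneg _

end Network

theorem entropy_drift_uniform_gap_general {J R : Type} [Fintype J] [Fintype R]
    [Nonempty J] [Nonempty R]
    (K : R → ℕ)
    (link : R → ℕ → J)
    (hcover : ∀ j, ∃ r, ∃ k < K r, link r k = j)
    (abar : R → ℝ)
    (C : Set (J → ℝ))
    (habarJ_int :
      (fun j => ∑ r ∈ Finset.univ.filter (fun r => ∃ k < K r, link r k = j), abar r)
        ∈ interior C)
    (sstar : (J → ℝ) → J → ℝ)
    (hsstar : ∀ q : J → ℝ, (∀ j, 0 ≤ q j) → q ≠ 0 →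
      sstar q ∈ C ∧ (∀ j, 0 < q j → 0 < sstar q j) ∧
      ∀ s ∈ C, (∀ j, 0 < q j → 0 < s j) →
        ∑ j ∈ Finset.univ.filter (fun j => 0 < q j), q j * Real.log (s j)
          ≤ ∑ j ∈ Finset.univ.filter (fun j => 0 < q j), q j * Real.log (sstar q j)) :
    ∃ ε > (0 : ℝ), ∀ x : J → R → ℝ, (∀ r, ∀ k < K r, 0 < x (link r k) r) →
      ε ≤ ∑ r, ∑ k ∈ Finset.range (K r + 1),
        (uval K link abar sstar x r k - uval K link abar sstar x r (k + 1)) ^ 2 := by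
  obtain ⟨δ, hδ, hball⟩ := Metric.isOpen_iff.mp isOpen_interior _ habarJ_int
  set M : ℕ := ∑ r, #(range (K r + 1))
  have hM : (0 : ℝ) < M := Nat.cast_pos.mpr (sum_pos (fun r _ => by simp) univ_nonempty)
  have hδM : 0 < δ / M := div_pos hδ hM
  refine ⟨(δ / M) ^ 2, pow_pos hδM 2, fun x hx => ?_⟩
  set σ := sstar (qOf K link x)
  have hq : ∀ j, 0 < qOf K link x j := fun j => qOf_pos K link hx (hcover j)
  obtain ⟨-, hσ_pos, hσ_max⟩ := hsstar _ (fun j => (hq j).le)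
    fun h => (hq (Classical.arbitrary J)).ne' (congrFun h _)
  have hfilter : univ.filter (fun j => 0 < qOf K link x j) = univ :=
    filter_true_of_mem fun j _ => hq j
  have hσ_bdry : σ ∉ interior C := notMem_interior_of_forall_sum_mul_log_le hq
    (fun j => hσ_pos j (hq j))
    fun t ht ht_pos => by
      have h := hσ_max t ht fun j _ => ht_pos j
      rwa [hfilter] at h
  set ā : J → ℝ := fun j => ∑ r ∈ univ.filter (fun r => ∃ k < K r, link r k = j), abar r
  set S := ∑ r, ∑ k ∈ range (K r + 1),
    (uval K link abar sstar x r k - uval K link abar sstar x r (k + 1)) ^ 2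
  have hδ_le : δ ≤ dist σ ā := not_lt.mp fun h => hσ_bdry (hball (Metric.mem_ball.mpr h))
  have hdist : dist σ ā ≤ M * √S :=
    (dist_pi_le_iff (mul_nonneg M.cast_nonneg (sqrt_nonneg S))).mpr fun j =>
      (Real.dist_eq _ _).trans_le <|
        (abs_sstar_sub_sum_abar_le K link abar sstar x (hq j).ne').trans
          (sum_sum_abs_le_mul_sqrt_sum_sum_sq univ (fun r => range (K r + 1)) _)
  rw [← le_sqrt' hδM, div_le_iff₀' hM]
  exact hδ_le.trans hdist

/-- Uniform strict negativity of the entropy drift terms: there is an `ε > 0`,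
depending only on the network data, such that for every positive state `x` the
sum over routes of the squared successive differences of the normalized flow
terms is at least `ε`. -/
theorem entropy_drift_uniform_gap {J R : Type} [Fintype J] [Fintype R]
    [Nonempty J] [Nonempty R]
    (K : R → ℕ) (hK : ∀ r, 1 ≤ K r)
    (link : R → ℕ → J)
    (hlink_inj : ∀ r, ∀ k < K r, ∀ l < K r, link r k = link r l → k = l)
    (hcover : ∀ j, ∃ r, ∃ k < K r, link r k = j)
    (abar : R → ℝ) (habar_pos : ∀ r, 0 < abar r)
    (C : Set (J → ℝ)) (hC_compact : IsCompact C) (hC_convex : Convex ℝ C)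
    (hC_int : (interior C).Nonempty) (hC_nonneg : ∀ s ∈ C, ∀ j, 0 ≤ s j)
    (habarJ_int :
      (fun j => ∑ r ∈ Finset.univ.filter (fun r => ∃ k < K r, link r k = j), abar r)
        ∈ interior C)
    (sstar : (J → ℝ) → J → ℝ)
    (hsstar : ∀ q : J → ℝ, (∀ j, 0 ≤ q j) → q ≠ 0 →
      sstar q ∈ C ∧ (∀ j, 0 < q j → 0 < sstar q j) ∧
      ∀ s ∈ C, (∀ j, 0 < q j → 0 < s j) →
        ∑ j ∈ Finset.univ.filter (fun j => 0 < q j), q j * Real.log (s j)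
          ≤ ∑ j ∈ Finset.univ.filter (fun j => 0 < q j), q j * Real.log (sstar q j)) :
    ∃ ε > (0 : ℝ), ∀ x : J → R → ℝ, (∀ r, ∀ k < K r, 0 < x (link r k) r) →
      ε ≤ ∑ r, ∑ k ∈ Finset.range (K r + 1),
        (uval K link abar sstar x r k - uval K link abar sstar x r (k + 1)) ^ 2 :=
  entropy_drift_uniform_gap_general K link hcover abar C habarJ_int sstar hsstar
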